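/- arXiv:1408.0132 — 8 statements merged into one kernel-verified Lean document; each statement's English description precedes it below -/
import Mathlib

section
/- Let G be a nontrivial connected finite simple graph, let (u,v) be a pair of distinct vertices of G, and let w be a vertex of G. Then r_w(u,v) = 1/2 if and only if w ∈ {u,v} and d(u,x) = d(v,x) for all x ∈ V(G) − {u,v} (equivalently, Π_u − {v} = Π_v − {u}). -/
open Finset

variable {V : Type*} [Fintype V] [DecidableEq V]

/-- The resolving neighborhood `R(u,v)`: the set of vertices resolving the pair `(u,v)`. -/
noncomputable def resolvingNbhd (G : SimpleGraph V) (u v : V) : Finset V :=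
  Finset.univ.filter fun x => G.dist u x ≠ G.dist v x

/-- The resolving share `r_w(u,v)` of a vertex `w` for the pair `(u,v)`. -/
noncomputable def rShare (G : SimpleGraph V) (w u v : V) : ℚ :=
  if G.dist u w ≠ G.dist v w then 1 / (resolvingNbhd G u v).card else 0

/-- The resolvent neighborhood of `w`, as ordered pairs. Since `rShare` is symmetric
in the pair, averaging over ordered pairs agrees with averaging over unordered pairs. -/
noncomputable def resolventNbhd (G : SimpleGraph V) (w : V) : Finset (V × V) :=
  Finset.univ.filter fun p => p.1 ≠ p.2 ∧ G.dist p.1 w ≠ G.dist p.2 w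

/-- The average resolving share `ar_w(G)` of `w` in `G`. -/
noncomputable def arShare (G : SimpleGraph V) (w : V) : ℚ :=
  (∑ p ∈ resolventNbhd G w, rShare G w p.1 p.2) / (resolventNbhd G w).card

/-- The resolving topological index `𝓡(G)`. -/
noncomputable def rIndex (G : SimpleGraph V) : ℚ :=
  ∑ w : V, arShare G w

lemma mem_resolvingNbhd_iff (G : SimpleGraph V) (u v x : V) :
    x ∈ resolvingNbhd G u v ↔ G.dist u x ≠ G.dist v x := by
  simp [resolvingNbhd]

lemma pair_subset_resolvingNbhd (G : SimpleGraph V) (hG : G.Connected) {u v : V}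
    (huv : u ≠ v) : ({u, v} : Finset V) ⊆ resolvingNbhd G u v := by
  intro x hx
  rw [mem_resolvingNbhd_iff]
  rcases Finset.mem_insert.1 hx with rfl | hx
  · simp only [SimpleGraph.dist_self]
    exact fun h => huv ((hG.dist_eq_zero_iff).mp h.symm).symm
  · rw [Finset.mem_singleton.1 hx]
    simp only [SimpleGraph.dist_self]
    exact fun h => huv ((hG.dist_eq_zero_iff).mp h)

/-- `r_w(u,v) = 1/2` iff `w ∈ {u,v}` and `d(u,x) = d(v,x)` for all
`x ∈ V(G) − {u,v}` (i.e. `Π_u − {v} = Π_v − {u}`). -/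
theorem rShare_eq_half_iff (G : SimpleGraph V) [Nontrivial V] (hG : G.Connected)
    (u v w : V) (huv : u ≠ v) :
    rShare G w u v = 1 / 2 ↔
      (w ∈ ({u, v} : Set V) ∧ ∀ x : V, x ∉ ({u, v} : Set V) → G.dist u x = G.dist v x) := by
  have hsub := pair_subset_resolvingNbhd G hG huv
  have hcardpair : ({u, v} : Finset V).card = 2 := Finset.card_pair huv
  constructor
  · intro h
    rw [rShare] at h
    split_ifs at h with hw
    · -- 1 / card = 1/2 so card = 2
      have hcard : (resolvingNbhd G u v).card = 2 := by
        have hne : ((resolvingNbhd G u v).card : ℚ) ≠ 0 := by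
          have : u ∈ resolvingNbhd G u v := hsub (by simp)
          have := Finset.card_pos.mpr ⟨u, this⟩
          exact_mod_cast this.ne'
        field_simp at h
        exact_mod_cast h.symm
      have heq : resolvingNbhd G u v = {u, v} :=
        (Finset.eq_of_subset_of_card_le hsub (by omega)).symm
      have hwmem : w ∈ resolvingNbhd G u v := (mem_resolvingNbhd_iff G u v w).mpr hw
      rw [heq] at hwmem
      constructor
      · simpa using hwmem
      · intro x hx
        by_contra hxd
        have : x ∈ resolvingNbhd G u v := (mem_resolvingNbhd_iff G u v x).mpr hxd
        rw [heq] at this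
        simp only [Set.mem_insert_iff, Set.mem_singleton_iff] at hx
        push_neg at hx
        rcases Finset.mem_insert.1 this with rfl | h'
        · exact hx.1 rfl
        · exact hx.2 (Finset.mem_singleton.1 h')
    · exact absurd h (by norm_num)
  · rintro ⟨hwmem, hall⟩
    have heq : resolvingNbhd G u v = {u, v} := by
      apply Finset.Subset.antisymm _ hsub
      intro x hx
      rw [mem_resolvingNbhd_iff] at hx
      by_contra hx'
      refine hx (hall x ?_)
      simp only [Set.mem_insert_iff, Set.mem_singleton_iff]
      push_neg
      constructor <;> intro h <;> exact hx' (by simp [h])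
    have hwres : G.dist u w ≠ G.dist v w := by
      have : w ∈ resolvingNbhd G u v := by
        rw [heq]
        simp only [Set.mem_insert_iff, Set.mem_singleton_iff] at hwmem
        rcases hwmem with rfl | rfl <;> simp
      exact (mem_resolvingNbhd_iff G u v w).mp this
    rw [rShare, if_pos hwres, heq, hcardpair]
    norm_num
end

section
/- Let G be a nontrivial connected finite simple graph of order |G| and let (u,v) be a pair of distinct vertices of G. If r_w(u,v) = 1/|G| for every vertex w ∈ V(G), then the distance d(u,v) is odd. -/
open Finset

variable {V : Type*} [Fintype V] [DecidableEq V]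

private lemma dist_getVert_left {V : Type*} {G : SimpleGraph V} (hG : G.Connected) {u v : V}
    (p : G.Walk u v) (n : ℕ) : G.dist u (p.getVert n) ≤ n := by
  induction p generalizing n with
  | nil => simp [SimpleGraph.Walk.getVert, SimpleGraph.dist_self]
  | cons h q ih =>
    cases n with
    | zero => simp [SimpleGraph.dist_self]
    | succ n =>
      rw [SimpleGraph.Walk.getVert_cons_succ]
      calc G.dist _ (q.getVert n) ≤ G.dist _ _ + G.dist _ (q.getVert n) :=
            hG.dist_triangle
        _ ≤ 1 + n := by
            gcongr
            · exact (SimpleGraph.dist_le h.toWalk).trans (by simp)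
            · exact ih n
        _ = n + 1 := by omega

private lemma dist_getVert_right {V : Type*} (G : SimpleGraph V) {u v : V}
    (p : G.Walk u v) (n : ℕ) : G.dist (p.getVert n) v ≤ p.length - n := by
  induction p generalizing n with
  | nil => simp [SimpleGraph.Walk.getVert]
  | cons h q ih =>
    cases n with
    | zero =>
      exact le_trans (SimpleGraph.dist_le (SimpleGraph.Walk.cons h q)) (by simp)
    | succ n =>
      rw [SimpleGraph.Walk.getVert_cons_succ]
      calc G.dist (q.getVert n) _ ≤ q.length - n := ih n
        _ ≤ (SimpleGraph.Walk.cons h q).length - (n + 1) := by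
            simp [SimpleGraph.Walk.length_cons]

/-- If `r_w(u,v) = 1/|G|` for every vertex `w`, then `d(u,v)` is odd. -/
theorem odd_dist_of_rShare_eq_inv_card (G : SimpleGraph V) [Nontrivial V] (hG : G.Connected)
    (u v : V) (huv : u ≠ v)
    (h : ∀ w : V, rShare G w u v = 1 / (Fintype.card V : ℚ)) :
    Odd (G.dist u v) := by
  by_contra hodd
  rw [Nat.not_odd_iff_even] at hodd
  obtain ⟨k, hk⟩ := hodd
  obtain ⟨p, hp⟩ := hG.exists_walk_length_eq_dist u v
  set x := p.getVert k with hx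
  have h1 : G.dist u x ≤ k := dist_getVert_left hG p k
  have h2 : G.dist x v ≤ k := by
    have h3 := dist_getVert_right G p k
    rw [hp, hk, ← hx] at h3
    omega
  have htri : G.dist u v ≤ G.dist u x + G.dist x v := hG.dist_triangle
  have hne : G.dist u x ≠ G.dist v x := by
    intro heq
    have := h x
    rw [rShare, if_neg (by simpa using heq)] at this
    have hcard : (0 : ℚ) < (Fintype.card V : ℚ) := by
      exact_mod_cast Fintype.card_pos
    rw [eq_comm, div_eq_zero_iff] at this
    rcases this with h' | h' <;> simp_all
  have hc : G.dist v x = G.dist x v := SimpleGraph.dist_comm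
  omega
end

section
/- Let G be a connected finite simple graph of order |G| with diameter 2. Then there are at most ⌊(|G|/2)²⌋ unordered pairs (u,v) of distinct vertices of G for which r_w(u,v) = 1/|G| for every vertex w ∈ V(G) (equivalently, at most ⌊(|G|/2)²⌋ pairs (u,v) with R(u,v) = V(G)). -/
open Finset

variable {V : Type*} [Fintype V] [DecidableEq V]

open scoped Classical in
/-- Mantel-type bound: a symmetric, triangle-free relation has at most
`⌊n²/4⌋` unordered pairs. -/
lemma mantel_aux (Q : V → V → Prop) (hsym : ∀ u v, Q u v → Q v u)
    (htri : ∀ u v w, Q u v → Q u w → Q v w → False)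
    (S : Finset (Sym2 V)) (hmem : ∀ p ∈ S, ∃ u v : V, p = s(u, v) ∧ Q u v) :
    S.card ≤ Fintype.card V ^ 2 / 4 := by
  cases isEmpty_or_nonempty V with
  | inl h =>
    have : S = ∅ := Finset.eq_empty_of_isEmpty S
    simp [this]
  | inr h =>
    set deg : V → ℕ := fun u => (Finset.univ.filter fun c => Q u c).card with hdeg
    obtain ⟨x, -, hx⟩ := Finset.exists_max_image Finset.univ deg ⟨Classical.arbitrary V, Finset.mem_univ _⟩
    set d := deg x with hd
    set B := Finset.univ.filter fun b => ¬ Q x b with hB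
    have hBcard : d + B.card = Fintype.card V := by
      simpa using Finset.card_filter_add_card_filter_not (s := Finset.univ)
        (p := fun b => Q x b)
    -- every pair in S has an element in B
    have hsub : S ⊆ B.biUnion fun b => S.filter fun p => b ∈ p := by
      intro p hp
      obtain ⟨u, v, rfl, huv⟩ := hmem p hp
      rw [Finset.mem_biUnion]
      by_cases hxu : Q x u
      · by_cases hxv : Q x v
        · exact absurd huv (fun huv => htri x u v hxu hxv huv)
        · exact ⟨v, by simp [hB, hxv], Finset.mem_filter.mpr ⟨hp, by simp⟩⟩
      · exact ⟨u, by simp [hB, hxu], Finset.mem_filter.mpr ⟨hp, by simp⟩⟩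
    have hfil : ∀ b : V, (S.filter fun p => b ∈ p).card ≤ d := by
      intro b
      have himg : (S.filter fun p => b ∈ p) ⊆
          (Finset.univ.filter fun c => Q b c).image fun c => s(b, c) := by
        intro p hp
        obtain ⟨hpS, hbp⟩ := Finset.mem_filter.mp hp
        obtain ⟨u, v, rfl, huv⟩ := hmem _ hpS
        rcases Sym2.mem_iff.mp hbp with rfl | rfl
        · exact Finset.mem_image.mpr ⟨v, by simpa using huv, rfl⟩
        · exact Finset.mem_image.mpr ⟨u, by simpa using hsym u b huv, Sym2.eq_swap⟩
      calc (S.filter fun p => b ∈ p).card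
          ≤ ((Finset.univ.filter fun c => Q b c).image fun c => s(b, c)).card :=
            Finset.card_le_card himg
        _ ≤ (Finset.univ.filter fun c => Q b c).card := Finset.card_image_le
        _ ≤ d := hx b (Finset.mem_univ b)
    have hcount : S.card ≤ B.card * d := by
      calc S.card ≤ (B.biUnion fun b => S.filter fun p => b ∈ p).card :=
            Finset.card_le_card hsub
        _ ≤ ∑ b ∈ B, (S.filter fun p => b ∈ p).card := Finset.card_biUnion_le
        _ ≤ ∑ _b ∈ B, d := Finset.sum_le_sum fun b _ => hfil b
        _ = B.card * d := by rw [Finset.sum_const, smul_eq_mul]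
    refine hcount.trans ?_
    rw [Nat.le_div_iff_mul_le (by norm_num)]
    nlinarith [hBcard, sq_nonneg (B.card - d : ℤ)]

set_option maxHeartbeats 1000000 in
open scoped Classical in
/-- If `diam(G) = 2`, there are at most `⌊(|G|/2)²⌋` unordered pairs of distinct
vertices `(u,v)` with `r_w(u,v) = 1/|G|` for every vertex `w`. -/
theorem card_pairs_rShare_eq_inv_card_le (G : SimpleGraph V) (hG : G.Connected)
    (hdiam : G.diam = 2) :
    (Finset.univ.filter fun p : Sym2 V =>
        ∃ u v : V, p = s(u, v) ∧ u ≠ v ∧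
          ∀ w : V, rShare G w u v = 1 / (Fintype.card V : ℚ)).card ≤
      Fintype.card V ^ 2 / 4 := by
  have hne : Nonempty V := hG.nonempty
  have hcard : (0 : ℚ) < Fintype.card V := by
    exact_mod_cast Fintype.card_pos
  have hediam : G.ediam ≠ ⊤ :=
    SimpleGraph.ediam_ne_top_of_diam_ne_zero (by omega)
  -- if the share condition holds, every vertex resolves the pair
  have hres : ∀ u v : V, (∀ w : V, rShare G w u v = 1 / (Fintype.card V : ℚ)) →
      ∀ w : V, G.dist u w ≠ G.dist v w := by
    intro u v h w hw
    have := h w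
    rw [rShare, if_neg (by simpa using hw)] at this
    exact absurd this.symm (by positivity)
  have hRsymm : ∀ u v : V, resolvingNbhd G u v = resolvingNbhd G v u := by
    intro u v
    unfold resolvingNbhd
    apply Finset.filter_congr
    intro x _
    exact ne_comm
  refine mantel_aux (fun u v => u ≠ v ∧ ∀ w : V, rShare G w u v = 1 / (Fintype.card V : ℚ))
    ?_ ?_ _ (fun p hp => (Finset.mem_filter.mp hp).2)
  · rintro u v ⟨hne', hsh⟩
    refine ⟨hne'.symm, fun w => ?_⟩
    rw [← hsh w]
    unfold rShare
    rw [hRsymm v u]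
    by_cases h : G.dist u w = G.dist v w
    · rw [if_neg (by simpa using h.symm), if_neg (by simpa using h)]
    · rw [if_pos (by simpa using (Ne.symm h)), if_pos (by simpa using h)]
  · rintro u v w ⟨huv, h1⟩ ⟨huw, h2⟩ ⟨hvw, h3⟩
    have hab : G.dist v u ≠ G.dist w u := hres v w h3 u
    have hac : G.dist u v ≠ G.dist w v := hres u w h2 v
    have hbc : G.dist u w ≠ G.dist v w := hres u v h1 w
    rw [SimpleGraph.dist_comm] at hab
    rw [SimpleGraph.dist_comm (u := w)] at hab hac
    have p1 : 0 < G.dist u v := hG.pos_dist_of_ne huv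
    have p2 : 0 < G.dist u w := hG.pos_dist_of_ne huw
    have p3 : 0 < G.dist v w := hG.pos_dist_of_ne hvw
    have l1 : G.dist u v ≤ 2 := hdiam ▸ SimpleGraph.dist_le_diam hediam
    have l2 : G.dist u w ≤ 2 := hdiam ▸ SimpleGraph.dist_le_diam hediam
    have l3 : G.dist v w ≤ 2 := hdiam ▸ SimpleGraph.dist_le_diam hediam
    omega
end

section
/- The resolving topological index of the Petersen graph is 5/3. Here the Petersen graph is the graph whose vertices are the 2-element subsets of {1,2,3,4,5}, with two vertices adjacent if and only if the corresponding subsets are disjoint. -/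
open Finset

variable {V : Type*} [Fintype V] [DecidableEq V]

/-- The Petersen graph: vertices are the 2-element subsets of `{1,…,5}`, adjacent iff
disjoint. -/
def petersenGraph : SimpleGraph {s : Finset (Fin 5) // s.card = 2} where
  Adj a b := Disjoint a.1 b.1
  symm := ⟨fun _ _ h => h.symm⟩
  loopless := ⟨by
    intro a h
    try dsimp only at h
    have h2 := a.2
    rw [disjoint_self] at h
    rw [h] at h2
    simp at h2⟩

/-!
The Petersen graph has diameter 2, with distance 1 exactly between disjoint pairs. Each
vertex has 3 neighbours, adjacent vertices have no common neighbour and non-adjacent ones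
exactly one. Hence, for adjacent `u, v`, the vertices not resolving them are the 4 vertices
at distance 2 from both; for non-adjacent `u, v` they are their common neighbour and the 3
vertices at distance 2 from both. So every pair is resolved by exactly 6 vertices, every
resolving share equals `1/6`, so does every average share, and the index is `10/6 = 5/3`.
-/

open SimpleGraph

lemma SimpleGraph.dist_eq_two_of_adj_of_adj {α : Type*} {G : SimpleGraph α} {u v w : α}
    (huv : u ≠ v) (hnadj : ¬G.Adj u v) (huw : G.Adj u w) (hwv : G.Adj w v) :
    G.dist u v = 2 := by
  have hedist : G.edist u v = 2 :=
    edist_eq_two_iff.mpr ⟨huv, hnadj, w, G.mem_commonNeighbors.mpr ⟨huw, hwv.symm⟩⟩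
  rw [dist, hedist]
  rfl

section ResolvingIndex

variable {G : SimpleGraph V}

lemma rShare_of_mem_resolventNbhd {w : V} {p : V × V} (hp : p ∈ resolventNbhd G w) :
    rShare G w p.1 p.2 = 1 / #(resolvingNbhd G p.1 p.2) :=
  if_pos (mem_filter.mp hp).2.2

lemma resolventNbhd_nonempty [Nontrivial V] (hG : G.Preconnected) (w : V) :
    (resolventNbhd G w).Nonempty := by
  obtain ⟨v, hv⟩ := exists_ne w
  refine ⟨(w, v), mem_filter.mpr ⟨mem_univ _, hv.symm, ?_⟩⟩
  rw [dist_self]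
  exact ((hG v w).pos_dist_of_ne hv).ne

lemma arShare_eq_of_card_resolvingNbhd {k : ℕ}
    (hk : ∀ u v, u ≠ v → #(resolvingNbhd G u v) = k) {w : V}
    (hw : (resolventNbhd G w).Nonempty) : arShare G w = 1 / k := by
  have hshare : ∀ p ∈ resolventNbhd G w, rShare G w p.1 p.2 = 1 / k := fun p hp => by
    rw [rShare_of_mem_resolventNbhd hp, hk _ _ (mem_filter.mp hp).2.1]
  have hcard : (#(resolventNbhd G w) : ℚ) ≠ 0 := by exact_mod_cast hw.card_pos.ne'
  rw [arShare, sum_congr rfl hshare, sum_const, nsmul_eq_mul]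
  field_simp

theorem rIndex_eq_of_card_resolvingNbhd [Nontrivial V] (hG : G.Preconnected) {k : ℕ}
    (hk : ∀ u v, u ≠ v → #(resolvingNbhd G u v) = k) :
    rIndex G = Fintype.card V / k := by
  simp only [rIndex, arShare_eq_of_card_resolvingNbhd hk (resolventNbhd_nonempty hG _),
    sum_const, card_univ, nsmul_eq_mul]
  ring

end ResolvingIndex

namespace petersenGraph

instance : Nontrivial {s : Finset (Fin 5) // s.card = 2} :=
  ⟨⟨⟨{0, 1}, rfl⟩, ⟨{0, 2}, rfl⟩, by decide⟩⟩

lemma exists_disjoint_disjoint :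
    ∀ a b : {s : Finset (Fin 5) // s.card = 2}, a ≠ b → ¬Disjoint a.1 b.1 →
      ∃ c : {s : Finset (Fin 5) // s.card = 2}, Disjoint a.1 c.1 ∧ Disjoint c.1 b.1 := by
  decide

lemma dist_eq (a b : {s : Finset (Fin 5) // s.card = 2}) :
    petersenGraph.dist a b = if a = b then 0 else if Disjoint a.1 b.1 then 1 else 2 := by
  split_ifs with hab hadj
  · rw [hab, dist_self]
  · exact dist_eq_one_iff_adj.mpr hadj
  · obtain ⟨c, hac, hcb⟩ := exists_disjoint_disjoint a b hab hadj
    exact dist_eq_two_of_adj_of_adj hab hadj hac hcb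

lemma preconnected : petersenGraph.Preconnected := fun a b => by
  by_cases hab : a = b
  · rw [hab]
  · exact Reachable.of_dist_ne_zero (by rw [dist_eq]; split_ifs <;> simp)

lemma card_resolvingNbhd :
    ∀ a b, a ≠ b → #(resolvingNbhd petersenGraph a b) = 6 := by
  simp only [resolvingNbhd, dist_eq]
  decide

end petersenGraph

/-- The resolving topological index of the Petersen graph is `5/3`. -/
theorem rIndex_petersen : rIndex petersenGraph = 5 / 3 := by
  rw [rIndex_eq_of_card_resolvingNbhd petersenGraph.preconnected
    petersenGraph.card_resolvingNbhd, Fintype.card_finset_len]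
  norm_num [Nat.choose_two_right]
end

section
/- Let G be the path graph on n ≥ 3 vertices. If n is even then the resolving topological index of G equals Σ_{i=1}^{n/2} (2n² − 3n − 4i + 4) / (n(n−1)² − 2(n−1)(i−1)); if n is odd then it equals (2n² − 3n − 1)/(2n(n−1)²) + Σ_{i=1}^{⌊n/2⌋} (2n³ − 3n² − 4n(i−1) + 1) / (n²(n−1)² − 2n(n−1)(i−1)). -/
open Finset

variable {V : Type*} [Fintype V] [DecidableEq V]

/-!
On the path `0, 1, …, n - 1` the distance is `d(u, x) = |u - x|`, so a vertex fails to resolve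
`u ≠ v` exactly when it is their midpoint. Hence `|R(u, v)|` is `n - 1` or `n` according as
`u + v` is even or odd, and `w` resolves every ordered pair of distinct vertices except the
`2k` pairs placed symmetrically about it, where `k = min(w, n - 1 - w)` is its distance to the
nearer end. With `A = 2⌊n/2⌋⌈n/2⌉` odd-sum pairs and `c = n(n - 1) - 2k` pairs resolved by `w`,
the average share of `w` is `(A/n + (c - A)/(n - 1)) / c = (1 - A/(nc)) / (n - 1)`. It depends
only on `k`, so pairing `w` with `n - 1 - w` folds the sum over the path in half.
-/

namespace Finset

theorem sum_range_min_reflect {M : Type*} [AddCommMonoid M] (f : ℕ → M) (n : ℕ) :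
    ∑ w ∈ range n, f (min w (n - 1 - w)) =
      ∑ i ∈ range ((n + 1) / 2), f i + ∑ i ∈ range (n / 2), f i := by
  rcases Nat.eq_zero_or_pos n with rfl | hn
  · simp
  rw [range_eq_Ico, ← sum_Ico_consecutive _ (Nat.zero_le _) (by omega : (n + 1) / 2 ≤ n)]
  congr 1
  · rw [← range_eq_Ico]
    refine sum_congr rfl fun w hw => congrArg f (min_eq_left ?_)
    rw [mem_range] at hw
    omega
  · have hreflect : ∀ w ∈ Ico ((n + 1) / 2) n, f (min w (n - 1 - w)) = f (n - 1 - w) :=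
      fun w hw => congrArg f (min_eq_right (by rw [mem_Ico] at hw; omega))
    rw [sum_congr rfl hreflect, sum_Ico_reflect f _ (by omega : n ≤ n - 1 + 1), range_eq_Ico]
    congr 2 <;> omega

theorem sum_range_eq_sum_Icc_sub_one {M : Type*} [AddCommMonoid M] (f : ℕ → M) (k : ℕ) :
    ∑ i ∈ range k, f i = ∑ i ∈ Icc 1 k, f (i - 1) := by
  rw [range_eq_Ico, ← sum_Ico_add_right_sub_eq (f := f) 0 k 1, zero_add, Ico_add_one_right_eq_Icc]

end Finset

def oddSumPairCount (n : ℕ) : ℕ := 2 * (n / 2) * ((n + 1) / 2)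

namespace Fin

theorem card_filter_odd_and_card_filter_even (n : ℕ) :
    #{u : Fin n | Odd u.val} = n / 2 ∧ #{u : Fin n | Even u.val} = (n + 1) / 2 := by
  induction n with
  | zero => simp
  | succ n ih =>
    simp only [card_filter_univ_succ', val_zero, val_succ, Nat.odd_add_one, Nat.even_add_one,
      Nat.not_odd_iff_even, Nat.not_even_iff_odd, Nat.not_odd_zero, Even.zero, ite_true,
      ite_false, ih]
    omega

theorem card_filter_odd_add (n : ℕ) :
    #{p : Fin n × Fin n | Odd (p.1.val + p.2.val)} = oddSumPairCount n := by
  set E : Finset (Fin n) := {u | Even u.val}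
  set O : Finset (Fin n) := {u | Odd u.val}
  have hsplit : ({p | Odd (p.1.val + p.2.val)} : Finset (Fin n × Fin n)) = E ×ˢ O ∪ O ×ˢ E := by
    ext p
    simp only [E, O, mem_filter, mem_univ, true_and, mem_union, mem_product, Nat.odd_iff,
      Nat.even_iff]
    omega
  have hdisj : Disjoint (E ×ˢ O) (O ×ˢ E) := by
    simp only [Finset.disjoint_left, E, O, mem_product, mem_filter, mem_univ, true_and,
      Nat.odd_iff, Nat.even_iff]
    omega
  rw [hsplit, card_union_of_disjoint hdisj, card_product, card_product,
    (card_filter_odd_and_card_filter_even n).1, (card_filter_odd_and_card_filter_even n).2,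
    oddSumPairCount]
  ring

theorem card_offDiag_filter_add_eq_two_mul {n : ℕ} (w : Fin n) :
    #{p ∈ (univ : Finset (Fin n)).offDiag | p.1.val + p.2.val = 2 * w.val} =
      2 * min w.val (n - 1 - w.val) := by
  set m := min w.val (n - 1 - w.val)
  calc _ = #((Icc (w.val - m) (w.val + m)).erase w.val) := by
        refine card_bij (fun p _ => p.1.val) (fun p hp => ?_) (fun p hp q hq hpq => ?_)
          (fun i hi => ?_)
        · simp only [mem_filter, mem_offDiag, mem_univ, true_and] at hp
          simp only [mem_erase, mem_Icc]
          omega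
        · simp only [mem_filter, mem_offDiag, mem_univ, true_and] at hp hq
          exact Prod.ext (Fin.ext hpq) (Fin.ext (by omega))
        · simp only [mem_erase, mem_Icc] at hi
          refine ⟨(⟨i, by omega⟩, ⟨2 * w.val - i, by omega⟩), ?_, rfl⟩
          simp only [mem_filter, mem_offDiag, mem_univ, true_and, ne_eq, Fin.ext_iff]
          omega
    _ = 2 * m := by
        rw [card_erase_of_mem (by simp only [mem_Icc]; omega), Nat.card_Icc]
        omega

end Fin

lemma cast_oddSumPairCount_of_even {n : ℕ} (he : Even n) :
    (oddSumPairCount n : ℚ) = (n : ℚ) ^ 2 / 2 := by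
  obtain ⟨m, rfl⟩ := he
  rw [oddSumPairCount, show (m + m) / 2 = m by omega, show (m + m + 1) / 2 = m by omega]
  push_cast
  ring

lemma cast_oddSumPairCount_of_odd {n : ℕ} (ho : Odd n) :
    (oddSumPairCount n : ℚ) = ((n : ℚ) ^ 2 - 1) / 2 := by
  obtain ⟨m, rfl⟩ := ho
  rw [oddSumPairCount, show (2 * m + 1) / 2 = m by omega,
    show (2 * m + 1 + 1) / 2 = m + 1 by omega]
  push_cast
  ring

namespace SimpleGraph

variable {n : ℕ}

lemma natDist_le_length_of_pathGraph_walk {u v : Fin n} (p : (pathGraph n).Walk u v) :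
    Nat.dist u v ≤ p.length := by
  induction p with
  | nil => simp
  | @cons a b c hadj q ih =>
    have hab : Nat.dist a b = 1 := by
      rw [pathGraph_adj] at hadj
      rcases hadj with h | h <;> simp [Nat.dist] <;> omega
    calc Nat.dist a c ≤ Nat.dist a b + Nat.dist b c := Nat.dist.triangle_inequality _ _ _
      _ ≤ q.length + 1 := by omega
      _ = (q.cons hadj).length := (Walk.length_cons _ _).symm

lemma pathGraph_dist_le_of_add_eq (k : ℕ) {u v : Fin n} (h : u.val + k = v.val) :
    (pathGraph n).dist u v ≤ k := by
  induction k generalizing v with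
  | zero => simp [Fin.ext (by omega : u.val = v.val)]
  | succ k ih =>
    let v' : Fin n := ⟨u.val + k, by omega⟩
    have hadj : (pathGraph n).Adj v' v := pathGraph_adj.mpr (Or.inl (by simp [v']; omega))
    calc (pathGraph n).dist u v ≤ (pathGraph n).dist u v' + (pathGraph n).dist v' v :=
          hadj.reachable.dist_triangle_right u
      _ ≤ k + 1 := by rw [dist_eq_one_iff_adj.mpr hadj]; exact Nat.add_le_add_right (ih rfl) 1

theorem pathGraph_dist (u v : Fin n) : (pathGraph n).dist u v = Nat.dist u v := by
  obtain ⟨p, hp⟩ := (pathGraph_preconnected n u v).exists_walk_length_eq_dist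
  refine le_antisymm ?_ (hp ▸ natDist_le_length_of_pathGraph_walk p)
  rcases le_total u.val v.val with h | h
  · exact pathGraph_dist_le_of_add_eq _ (by rw [Nat.dist_eq_sub_of_le h]; omega)
  · rw [dist_comm, Nat.dist_comm]
    exact pathGraph_dist_le_of_add_eq _ (by rw [Nat.dist_eq_sub_of_le h]; omega)

theorem pathGraph_dist_eq_dist_iff {u v x : Fin n} :
    (pathGraph n).dist u x = (pathGraph n).dist v x ↔ u = v ∨ u.val + v.val = 2 * x.val := by
  rw [pathGraph_dist, pathGraph_dist, Nat.dist, Nat.dist, Fin.ext_iff]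
  omega

end SimpleGraph

section PathGraph

open SimpleGraph

variable {n : ℕ}

lemma card_resolvingNbhd_pathGraph {u v : Fin n} (huv : u ≠ v) :
    #(resolvingNbhd (pathGraph n) u v) = if Even (u.val + v.val) then n - 1 else n := by
  have hR : resolvingNbhd (pathGraph n) u v =
      ({x | u.val + v.val ≠ 2 * x.val} : Finset (Fin n)) := by
    simp only [resolvingNbhd, ne_eq, pathGraph_dist_eq_dist_iff, huv, false_or]
  rw [hR]
  split_ifs with heven
  · obtain ⟨m, hm⟩ := heven
    have hmid : m < n := by omega
    rw [show ({x | u.val + v.val ≠ 2 * x.val} : Finset (Fin n)) = univ.erase ⟨m, hmid⟩ by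
      ext x
      simp only [ne_eq, mem_filter, mem_univ, true_and, mem_erase, Fin.ext_iff, and_true]
      omega]
    simp only [mem_univ, card_erase_of_mem, card_univ, Fintype.card_fin]
  · have hodd (x : Fin n) : u.val + v.val ≠ 2 * x.val := fun hx => heven ⟨x, by omega⟩
    rw [filter_true_of_mem fun x _ => hodd x, card_univ, Fintype.card_fin]

lemma resolventNbhd_pathGraph (w : Fin n) :
    resolventNbhd (pathGraph n) w =
      {p ∈ (univ : Finset (Fin n)).offDiag | p.1.val + p.2.val ≠ 2 * w.val} := by
  ext p
  simp only [resolventNbhd, mem_filter, mem_offDiag, mem_univ, true_and, ne_eq,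
    pathGraph_dist_eq_dist_iff, not_or, and_self_left]

lemma card_resolventNbhd_pathGraph (w : Fin n) :
    #(resolventNbhd (pathGraph n) w) = n * n - n - 2 * min w.val (n - 1 - w.val) := by
  have hsplit := card_filter_add_card_filter_not
    (s := (univ : Finset (Fin n)).offDiag) (fun p => p.1.val + p.2.val = 2 * w.val)
  rw [Fin.card_offDiag_filter_add_eq_two_mul, offDiag_card, card_univ, Fintype.card_fin] at hsplit
  rw [resolventNbhd_pathGraph]
  simp only [ne_eq]
  omega

/-- The average resolving share of a vertex at distance `k` from the nearer end of the path. -/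
noncomputable def pathArShare (n k : ℕ) : ℚ :=
  (1 - oddSumPairCount n / (n * ((n : ℚ) * (n - 1) - 2 * k))) / (n - 1)

lemma sum_rShare_pathGraph (w : Fin n) :
    ∑ p ∈ resolventNbhd (pathGraph n) w, rShare (pathGraph n) w p.1 p.2 =
      (oddSumPairCount n : ℚ) / n +
        (#(resolventNbhd (pathGraph n) w) - oddSumPairCount n : ℚ) / (n - 1) := by
  have hn : 1 ≤ n := Fin.pos w
  have hshare : ∀ p ∈ resolventNbhd (pathGraph n) w, rShare (pathGraph n) w p.1 p.2 =
      if Even (p.1.val + p.2.val) then 1 / ((n : ℚ) - 1) else 1 / (n : ℚ) := by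
    intro p hp
    simp only [resolventNbhd, mem_filter, mem_univ, true_and] at hp
    rw [rShare, if_pos hp.2, card_resolvingNbhd_pathGraph hp.1]
    split_ifs <;> simp [Nat.cast_sub hn]
  have hodd : {p ∈ resolventNbhd (pathGraph n) w | ¬Even (p.1.val + p.2.val)} =
      ({p | Odd (p.1.val + p.2.val)} : Finset (Fin n × Fin n)) := by
    ext p
    simp only [resolventNbhd_pathGraph, mem_filter, mem_offDiag, mem_univ, true_and,
      Nat.not_even_iff_odd, Nat.odd_iff]
    omega
  have hcount := card_filter_add_card_filter_not (s := resolventNbhd (pathGraph n) w)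
    (fun p => Even (p.1.val + p.2.val))
  rw [sum_congr rfl hshare, sum_ite, sum_const, sum_const, ← Fin.card_filter_odd_add, hodd,
    ← hcount, hodd]
  push_cast
  ring

lemma arShare_pathGraph (hn : 2 ≤ n) (w : Fin n) :
    arShare (pathGraph n) w = pathArShare n (min w.val (n - 1 - w.val)) := by
  obtain ⟨m, hm⟩ : ∃ m, min w.val (n - 1 - w.val) = m := ⟨_, rfl⟩
  have h2m : 2 * m + 1 ≤ n := by omega
  have hc : (#(resolventNbhd (pathGraph n) w) : ℚ) = (n : ℚ) * (n - 1) - 2 * m := by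
    have : 2 * n ≤ n * n := Nat.mul_le_mul_right n hn
    rw [card_resolventNbhd_pathGraph, hm, Nat.cast_sub (by omega), Nat.cast_sub (by omega)]
    push_cast
    ring
  have hn2 : (2 : ℚ) ≤ n := by exact_mod_cast hn
  have h2m' : (2 * m + 1 : ℚ) ≤ n := by exact_mod_cast h2m
  have hc0 : (n : ℚ) * (n - 1) - 2 * m ≠ 0 := by nlinarith
  have hn1 : (n : ℚ) - 1 ≠ 0 := by linarith
  have hn0 : (n : ℚ) ≠ 0 := by positivity
  rw [arShare, sum_rShare_pathGraph, hc, hm, pathArShare]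
  field_simp
  ring

lemma rIndex_pathGraph_eq_sum (hn : 2 ≤ n) :
    rIndex (pathGraph n) = ∑ w ∈ range n, pathArShare n (min w (n - 1 - w)) := by
  rw [rIndex, sum_congr rfl fun w _ => arShare_pathGraph hn w]
  exact Fin.sum_univ_eq_sum_range (fun w => pathArShare n (min w (n - 1 - w))) n

lemma pathArShare_add_self_of_even (he : Even n) {i : ℕ} (hi : i ∈ Icc 1 (n / 2)) :
    pathArShare n (i - 1) + pathArShare n (i - 1) =
      (2 * (n : ℚ) ^ 2 - 3 * n - 4 * i + 4) /
        ((n : ℚ) * ((n : ℚ) - 1) ^ 2 - 2 * ((n : ℚ) - 1) * ((i : ℚ) - 1)) := by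
  rw [mem_Icc] at hi
  have hi' : (2 * i : ℚ) ≤ n := by exact_mod_cast (by omega : 2 * i ≤ n)
  have hi1 : (1 : ℚ) ≤ i := by exact_mod_cast hi.1
  have hn1 : (n : ℚ) - 1 ≠ 0 := by linarith
  have hc : (n : ℚ) * (n - 1) - 2 * ((i : ℚ) - 1) ≠ 0 := by nlinarith
  rw [pathArShare, cast_oddSumPairCount_of_even he, Nat.cast_sub hi.1, Nat.cast_one,
    show (n : ℚ) * ((n : ℚ) - 1) ^ 2 - 2 * ((n : ℚ) - 1) * ((i : ℚ) - 1) =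
      ((n : ℚ) - 1) * ((n : ℚ) * (n - 1) - 2 * ((i : ℚ) - 1)) by ring]
  field_simp
  ring

lemma pathArShare_add_self_of_odd (ho : Odd n) {i : ℕ} (hi : i ∈ Icc 1 (n / 2)) :
    pathArShare n (i - 1) + pathArShare n (i - 1) =
      (2 * (n : ℚ) ^ 3 - 3 * (n : ℚ) ^ 2 - 4 * n * ((i : ℚ) - 1) + 1) /
        ((n : ℚ) ^ 2 * ((n : ℚ) - 1) ^ 2 - 2 * n * ((n : ℚ) - 1) * ((i : ℚ) - 1)) := by
  rw [mem_Icc] at hi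
  have hi' : (2 * i : ℚ) ≤ n := by exact_mod_cast (by omega : 2 * i ≤ n)
  have hi1 : (1 : ℚ) ≤ i := by exact_mod_cast hi.1
  have hn0 : (n : ℚ) ≠ 0 := by linarith
  have hn1 : (n : ℚ) - 1 ≠ 0 := by linarith
  have hc : (n : ℚ) * (n - 1) - 2 * ((i : ℚ) - 1) ≠ 0 := by nlinarith
  rw [pathArShare, cast_oddSumPairCount_of_odd ho, Nat.cast_sub hi.1, Nat.cast_one,
    show (n : ℚ) ^ 2 * ((n : ℚ) - 1) ^ 2 - 2 * n * ((n : ℚ) - 1) * ((i : ℚ) - 1) =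
      n * ((n : ℚ) - 1) * ((n : ℚ) * (n - 1) - 2 * ((i : ℚ) - 1)) by ring]
  field_simp
  ring

lemma pathArShare_half_of_odd (hn : 3 ≤ n) (ho : Odd n) :
    pathArShare n (n / 2) = (2 * (n : ℚ) ^ 2 - 3 * n - 1) / (2 * n * ((n : ℚ) - 1) ^ 2) := by
  have hhalf : ((n / 2 : ℕ) : ℚ) = ((n : ℚ) - 1) / 2 := by
    obtain ⟨m, rfl⟩ := ho
    rw [show (2 * m + 1) / 2 = m by omega]
    push_cast
    ring
  have hn3 : (3 : ℚ) ≤ n := by exact_mod_cast hn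
  have hn0 : (n : ℚ) ≠ 0 := by linarith
  have hn1 : (n : ℚ) - 1 ≠ 0 := by linarith
  rw [pathArShare, cast_oddSumPairCount_of_odd ho, hhalf,
    show (n : ℚ) * (n - 1) - 2 * (((n : ℚ) - 1) / 2) = ((n : ℚ) - 1) ^ 2 by ring]
  field_simp
  ring

end PathGraph

/-- The resolving topological index of the path on `n ≥ 3` vertices. -/
theorem rIndex_pathGraph (n : ℕ) (hn : 3 ≤ n) :
    (Even n →
      rIndex (SimpleGraph.pathGraph n) =
        ∑ i ∈ Finset.Icc 1 (n / 2),
          (2 * (n : ℚ) ^ 2 - 3 * n - 4 * i + 4) /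
            ((n : ℚ) * ((n : ℚ) - 1) ^ 2 - 2 * ((n : ℚ) - 1) * ((i : ℚ) - 1))) ∧
    (Odd n →
      rIndex (SimpleGraph.pathGraph n) =
        (2 * (n : ℚ) ^ 2 - 3 * n - 1) / (2 * n * ((n : ℚ) - 1) ^ 2) +
          ∑ i ∈ Finset.Icc 1 (n / 2),
            (2 * (n : ℚ) ^ 3 - 3 * (n : ℚ) ^ 2 - 4 * n * ((i : ℚ) - 1) + 1) /
              ((n : ℚ) ^ 2 * ((n : ℚ) - 1) ^ 2 - 2 * n * ((n : ℚ) - 1) * ((i : ℚ) - 1))) := by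
  rw [rIndex_pathGraph_eq_sum (by omega), sum_range_min_reflect]
  constructor
  · intro he
    rw [show (n + 1) / 2 = n / 2 by grind, ← sum_add_distrib, sum_range_eq_sum_Icc_sub_one]
    exact sum_congr rfl fun i hi => pathArShare_add_self_of_even he hi
  · intro ho
    rw [show (n + 1) / 2 = n / 2 + 1 by grind, sum_range_succ, add_right_comm,
      ← sum_add_distrib, sum_range_eq_sum_Icc_sub_one, add_comm, pathArShare_half_of_odd hn ho]
    exact congrArg _ (sum_congr rfl fun i hi => pathArShare_add_self_of_odd ho hi)
end

section
/- Let G be the cycle graph on n ≥ 3 vertices. Then the resolving topological index of G equals n(n−1)/(n² − 2n + 2) when n is even, and equals n/(n−1) when n is odd. -/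
open Finset

variable {V : Type*} [Fintype V] [DecidableEq V]

/-!
On `ℤ/nℤ` the cycle distance is `d(u, x) = ‖x - u‖` with `‖a‖ = min(a, n - a)`, so two distinct
vertices `u, v` are equidistant exactly from the solutions of `2x = u + v`. Writing `m(c)` for the
number of solutions of `2x = c`, the pair `(u, v)` is resolved by `n - m(u + v)` vertices. Grouping
the pairs resolved by `w` according to `c = u + v`, every `c ≠ 2w` contributes exactly `n - m(c)`
pairs, each with share `1 / (n - m(c))`. So the shares at `w` sum to `n - 1`, while
`|R(w)| = n² - 2n + m(2w)`; finally `m(2w) = m(0)`, which is `1` for odd `n` and `2` for even `n`.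
-/

def halves {A : Type*} [AddCommGroup A] [Fintype A] [DecidableEq A] (c : A) : Finset A :=
  {x | x + x = c}

section halves

variable {A : Type*} [AddCommGroup A] [Fintype A] [DecidableEq A]

lemma card_halves_add_self (w : A) : #(halves (w + w)) = #(halves (0 : A)) :=
  Finset.card_nbij' (· - w) (· + w)
    (fun x hx => by simp_all [halves, sub_add_sub_comm])
    (fun x hx => by simp_all [halves, add_add_add_comm x w x w])
    (fun x _ => by simp) (fun x _ => by simp)

lemma sum_card_halves : ∑ c : A, #(halves c) = Fintype.card A :=
  (Finset.card_eq_sum_card_fiberwise (f := fun x : A => x + x) (by simp)).symm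

lemma card_halves_lt_card {c w : A} (hc : c ≠ w + w) : #(halves c) < Fintype.card A :=
  Finset.card_lt_univ_of_notMem (x := w) (by simpa [halves] using hc.symm)

lemma card_filter_ne_add_eq (c : A) :
    #{p : A × A | p.1 ≠ p.2 ∧ p.1 + p.2 = c} = Fintype.card A - #(halves c) := by
  rw [← Finset.card_compl]
  refine Finset.card_nbij' Prod.fst (fun x => (x, c - x)) ?_ ?_ ?_ ?_
  · rintro ⟨u, v⟩ h
    simp only [halves, Finset.coe_filter, Finset.mem_univ, true_and, Set.mem_ofPred_eq,
      Finset.coe_compl, Set.mem_compl_iff] at h ⊢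
    obtain ⟨huv, rfl⟩ := h
    simpa using huv
  · intro x hx
    simp_all [halves, eq_sub_iff_add_eq]
  · rintro ⟨u, v⟩ h
    obtain ⟨-, rfl⟩ := Finset.mem_filter.mp h |>.2
    simp
  · intro x _
    rfl

end halves

namespace SimpleGraph

lemma Walk.le_add_length_of_adj_le_succ {V : Type*} {G : SimpleGraph V} {f : V → ℕ}
    (hadj : ∀ a b, G.Adj a b → f b ≤ f a + 1) {a b : V} (p : G.Walk a b) :
    f b ≤ f a + p.length := by
  induction p with
  | nil => simp
  | cons h _ ih =>
    rw [Walk.length_cons]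
    have := hadj _ _ h
    omega

lemma dist_eq_of_adj_le_succ {V : Type*} {G : SimpleGraph V} {u : V} (f : V → ℕ)
    (hzero : ∀ v, f v = 0 ↔ v = u) (hadj : ∀ a b, G.Adj a b → f b ≤ f a + 1)
    (hdesc : ∀ v, f v ≠ 0 → ∃ w, G.Adj w v ∧ f w + 1 = f v) (v : V) :
    G.dist u v = f v := by
  have hwalk : ∀ k v, f v = k → ∃ p : G.Walk u v, p.length = k := by
    intro k
    induction k with
    | zero =>
      rintro v hv
      obtain rfl := (hzero v).mp hv
      exact ⟨Walk.nil, rfl⟩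
    | succ k ih =>
      rintro v hv
      obtain ⟨w, hwv, hw⟩ := hdesc v (by omega)
      obtain ⟨p, hp⟩ := ih w (by omega)
      exact ⟨p.concat hwv, by rw [Walk.length_concat, hp]⟩
  obtain ⟨p, hp⟩ := hwalk (f v) v rfl
  obtain ⟨q, hq⟩ := p.reachable.exists_walk_length_eq_dist
  have hlower := q.le_add_length_of_adj_le_succ hadj
  rw [(hzero u).mpr rfl] at hlower
  have hupper := dist_le p
  omega

variable {A : Type*} [AddCommGroup A] [Fintype A] [DecidableEq A]

def BisectorsAreMidpoints (G : SimpleGraph A) : Prop :=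
  ∀ x u v, G.dist u x = G.dist v x ↔ u = v ∨ u + v = x + x

variable {G : SimpleGraph A}

lemma BisectorsAreMidpoints.card_resolvingNbhd (hG : G.BisectorsAreMidpoints) {u v : A}
    (huv : u ≠ v) : #(resolvingNbhd G u v) = Fintype.card A - #(halves (u + v)) := by
  rw [← Finset.card_compl]
  congr 1
  ext x
  simp [resolvingNbhd, halves, hG x, huv, eq_comm]

lemma BisectorsAreMidpoints.mem_resolventNbhd (hG : G.BisectorsAreMidpoints) {w : A}
    {p : A × A} : p ∈ resolventNbhd G w ↔ p.1 ≠ p.2 ∧ p.1 + p.2 ≠ w + w := by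
  simp +contextual [resolventNbhd, hG w]

lemma BisectorsAreMidpoints.sum_resolventNbhd {M : Type*} [AddCommMonoid M]
    (hG : G.BisectorsAreMidpoints) (w : A) (f : A → M) :
    ∑ p ∈ resolventNbhd G w, f (p.1 + p.2) =
      ∑ c ∈ univ.erase (w + w), (Fintype.card A - #(halves c)) • f c := by
  rw [← Finset.sum_fiberwise_of_maps_to (g := fun p : A × A => p.1 + p.2)
    (t := univ.erase (w + w)) (fun p hp => by simp [(hG.mem_resolventNbhd.mp hp).2])]
  refine Finset.sum_congr rfl fun c hc => ?_
  have hfiber : {p ∈ resolventNbhd G w | p.1 + p.2 = c} =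
      ({p : A × A | p.1 ≠ p.2 ∧ p.1 + p.2 = c} : Finset (A × A)) := by
    ext p
    simp only [Finset.mem_filter, Finset.mem_univ, true_and, hG.mem_resolventNbhd]
    constructor
    · rintro ⟨⟨hne, -⟩, hp⟩
      exact ⟨hne, hp⟩
    · rintro ⟨hne, rfl⟩
      exact ⟨⟨hne, Finset.ne_of_mem_erase hc⟩, rfl⟩
  rw [Finset.sum_congr hfiber fun p hp => by rw [(Finset.mem_filter.mp hp).2.2],
    Finset.sum_const, card_filter_ne_add_eq]

lemma BisectorsAreMidpoints.card_resolventNbhd (hG : G.BisectorsAreMidpoints) (w : A) :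
    (#(resolventNbhd G w) : ℚ) =
      (Fintype.card A : ℚ) ^ 2 - 2 * Fintype.card A + #(halves (w + w)) := by
  have hcard := hG.sum_resolventNbhd w fun _ => 1
  simp only [Finset.sum_const, smul_eq_mul, mul_one] at hcard
  rw [hcard, Nat.cast_sum, Finset.sum_erase_eq_sub (Finset.mem_univ _)]
  simp only [Nat.cast_sub (Finset.card_le_univ _), Finset.sum_sub_distrib, Finset.sum_const,
    Finset.card_univ, nsmul_eq_mul]
  rw [← Nat.cast_sum, sum_card_halves]
  ring

lemma BisectorsAreMidpoints.sum_rShare_resolventNbhd (hG : G.BisectorsAreMidpoints) (w : A) :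
    ∑ p ∈ resolventNbhd G w, rShare G w p.1 p.2 = Fintype.card A - 1 := by
  have hshare : ∀ p ∈ resolventNbhd G w,
      rShare G w p.1 p.2 = 1 / ((Fintype.card A - #(halves (p.1 + p.2)) : ℕ) : ℚ) := by
    intro p hp
    have hp' := Finset.mem_filter.mp hp
    rw [rShare, if_pos hp'.2.2, hG.card_resolvingNbhd hp'.2.1]
  rw [Finset.sum_congr rfl hshare, hG.sum_resolventNbhd w
    fun c => 1 / ((Fintype.card A - #(halves c) : ℕ) : ℚ)]
  have hterm : ∀ c ∈ univ.erase (w + w),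
      (Fintype.card A - #(halves c)) • (1 / ((Fintype.card A - #(halves c) : ℕ) : ℚ)) = 1 := by
    intro c hc
    have hpos : 0 < Fintype.card A - #(halves c) :=
      Nat.sub_pos_of_lt (card_halves_lt_card (Finset.ne_of_mem_erase hc))
    rw [nsmul_eq_mul, mul_one_div_cancel (by positivity)]
  rw [Finset.sum_congr rfl hterm, Finset.sum_const, Finset.card_erase_of_mem (Finset.mem_univ _),
    Finset.card_univ, nsmul_one, Nat.cast_pred Fintype.card_pos]

lemma BisectorsAreMidpoints.arShare_eq (hG : G.BisectorsAreMidpoints) (w : A) :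
    arShare G w = ((Fintype.card A : ℚ) - 1) /
      ((Fintype.card A : ℚ) ^ 2 - 2 * Fintype.card A + #(halves (w + w))) := by
  rw [arShare, hG.sum_rShare_resolventNbhd, hG.card_resolventNbhd]

lemma BisectorsAreMidpoints.rIndex_eq (hG : G.BisectorsAreMidpoints) :
    rIndex G = Fintype.card A * ((Fintype.card A : ℚ) - 1) /
      ((Fintype.card A : ℚ) ^ 2 - 2 * Fintype.card A + #(halves (0 : A))) := by
  simp only [rIndex, hG.arShare_eq, card_halves_add_self, Finset.sum_const, Finset.card_univ,
    nsmul_eq_mul, mul_div_assoc]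

end SimpleGraph

namespace Fin

variable {n : ℕ}

def cyclicNorm (a : Fin n) : ℕ := min a.val (n - a.val)

lemma cyclicNorm_add_le (a b : Fin n) : (a + b).cyclicNorm ≤ a.cyclicNorm + b.cyclicNorm := by
  have := a.isLt
  have := b.isLt
  simp only [cyclicNorm, Fin.val_add_eq_ite]
  split_ifs <;> omega

variable [NeZero n]

lemma cyclicNorm_eq_zero_iff {a : Fin n} : a.cyclicNorm = 0 ↔ a = 0 := by
  have := a.isLt
  simp only [cyclicNorm, Fin.ext_iff, Fin.val_zero]
  omega

lemma cyclicNorm_neg (a : Fin n) : (-a).cyclicNorm = a.cyclicNorm := by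
  have := a.isLt
  simp only [cyclicNorm, Fin.val_neg, Fin.ext_iff, Fin.val_zero]
  split_ifs <;> omega

lemma cyclicNorm_eq_cyclicNorm_iff {a b : Fin n} :
    a.cyclicNorm = b.cyclicNorm ↔ a = b ∨ a = -b := by
  have := a.isLt
  have := b.isLt
  simp only [cyclicNorm, Fin.ext_iff, Fin.val_neg, Fin.val_zero]
  split_ifs <;> omega

lemma exists_cyclicNorm_eq_one_and_sub {a : Fin n} (ha : a ≠ 0) :
    ∃ b : Fin n, b.cyclicNorm = 1 ∧ (a - b).cyclicNorm + 1 = a.cyclicNorm := by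
  have hlt := a.isLt
  have hpos : a.val ≠ 0 := Fin.val_ne_iff.mpr ha
  have hone : (1 : Fin n).val = 1 := by
    rw [Fin.val_one', Nat.mod_eq_of_lt (by omega)]
  by_cases hhalf : a.val ≤ n - a.val
  · refine ⟨1, by simp only [cyclicNorm, hone]; omega, ?_⟩
    have hsub : (a - 1).val = a.val - 1 := by
      rw [Fin.coe_sub_iff_le.mpr (by rw [Fin.le_def, hone]; omega), hone]
    simp only [cyclicNorm, hsub]
    omega
  · refine ⟨-1, ?_, ?_⟩
    · rw [cyclicNorm_neg]
      simp only [cyclicNorm, hone]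
      omega
    · simp only [cyclicNorm, sub_neg_eq_add, Fin.val_add_eq_ite, hone]
      split_ifs <;> omega

lemma card_halves_zero_of_even (hn : Even n) :
    #(halves (0 : Fin n)) = 2 := by
  obtain ⟨k, rfl⟩ := hn
  have hk : 0 < k := by have := NeZero.pos (k + k); omega
  rw [Finset.card_eq_two]
  refine ⟨0, ⟨k, by omega⟩, by simp [Fin.ext_iff]; omega, ?_⟩
  ext x
  have := x.isLt
  simp only [halves, Finset.mem_filter, Finset.mem_univ, true_and, Finset.mem_insert,
    Finset.mem_singleton, Fin.ext_iff, Fin.val_add_eq_ite, Fin.val_zero]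
  split_ifs <;> omega

lemma card_halves_zero_of_odd (hn : Odd n) :
    #(halves (0 : Fin n)) = 1 := by
  obtain ⟨k, rfl⟩ := hn
  rw [Finset.card_eq_one]
  refine ⟨0, ?_⟩
  ext x
  have := x.isLt
  simp only [halves, Finset.mem_filter, Finset.mem_univ, true_and, Finset.mem_singleton,
    Fin.ext_iff, Fin.val_add_eq_ite, Fin.val_zero]
  split_ifs <;> omega

end Fin

namespace SimpleGraph

variable {n : ℕ} [NeZero n]

lemma cycleGraph_adj_iff_cyclicNorm {u v : Fin n} :
    (cycleGraph n).Adj u v ↔ (v - u).cyclicNorm = 1 := by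
  have := (v - u).isLt
  rw [cycleGraph_adj', ← neg_sub v u, Fin.val_neg, Fin.cyclicNorm]
  split_ifs with h
  · simp [h]
  · have := Fin.val_ne_iff.mpr h
    rw [Fin.val_zero] at this
    omega

lemma cycleGraph_dist (u v : Fin n) : (cycleGraph n).dist u v = (v - u).cyclicNorm := by
  refine dist_eq_of_adj_le_succ (fun v => (v - u).cyclicNorm)
    (fun v => by rw [Fin.cyclicNorm_eq_zero_iff, sub_eq_zero]) (fun a b hab => ?_)
    (fun v hv => ?_) v
  · rw [← sub_add_sub_cancel b a u, add_comm, ← cycleGraph_adj_iff_cyclicNorm.mp hab]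
    exact Fin.cyclicNorm_add_le _ _
  · obtain ⟨c, hc, hsub⟩ :=
      Fin.exists_cyclicNorm_eq_one_and_sub (mt Fin.cyclicNorm_eq_zero_iff.mpr hv)
    refine ⟨v - c, by rwa [cycleGraph_adj_iff_cyclicNorm, sub_sub_cancel], ?_⟩
    rwa [sub_right_comm]

lemma cycleGraph_bisectorsAreMidpoints : (cycleGraph n).BisectorsAreMidpoints := by
  intro x u v
  rw [cycleGraph_dist, cycleGraph_dist, Fin.cyclicNorm_eq_cyclicNorm_iff, sub_right_inj, neg_sub,
    sub_eq_sub_iff_add_eq_add, add_comm v u, eq_comm (a := x + x)]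

end SimpleGraph

/-- The resolving topological index of the cycle on `n ≥ 3` vertices is
`n(n−1)/(n²−2n+2)` for even `n` and `n/(n−1)` for odd `n`. -/
theorem rIndex_cycleGraph (n : ℕ) (hn : 3 ≤ n) :
    (Even n →
      rIndex (SimpleGraph.cycleGraph n) =
        (n : ℚ) * ((n : ℚ) - 1) / ((n : ℚ) ^ 2 - 2 * n + 2)) ∧
    (Odd n → rIndex (SimpleGraph.cycleGraph n) = (n : ℚ) / ((n : ℚ) - 1)) := by
  have : NeZero n := ⟨by omega⟩
  have hrIndex := (SimpleGraph.cycleGraph_bisectorsAreMidpoints (n := n)).rIndex_eq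
  rw [Fintype.card_fin] at hrIndex
  refine ⟨fun heven => ?_, fun hodd => ?_⟩
  · rw [hrIndex, Fin.card_halves_zero_of_even heven, Nat.cast_two]
  · have hn1 : (n : ℚ) - 1 ≠ 0 := by
      rw [sub_ne_zero, Nat.cast_ne_one]
      omega
    rw [hrIndex, Fin.card_halves_zero_of_odd hodd, Nat.cast_one,
      show (n : ℚ) ^ 2 - 2 * n + 1 = ((n : ℚ) - 1) ^ 2 by ring]
    field_simp
end

section
/- Let G be the complete graph on n ≥ 2 vertices. Then the resolving topological index of G equals n/2. -/
/-! In a complete graph a pair `(u, v)` is resolved by exactly `u` and `v`, so every nonzero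
resolving share is `1/2`; hence each average share `ar_w` is `1/2`, and summing over the `n`
vertices gives `n/2`. -/

open Finset

variable {V : Type*} [Fintype V] [DecidableEq V]

open SimpleGraph

lemma resolvingNbhd_top {u v : V} (huv : u ≠ v) : resolvingNbhd ⊤ u v = {u, v} := by
  ext x
  by_cases hu : u = x <;> by_cases hv : v = x <;>
    simp_all [resolvingNbhd, dist_top, eq_comm]

lemma rShare_top_of_mem_resolventNbhd {w : V} {p : V × V} (hp : p ∈ resolventNbhd ⊤ w) :
    rShare ⊤ w p.1 p.2 = 1 / 2 := by
  obtain ⟨hne, hres⟩ := (mem_filter.mp hp).2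
  rw [rShare, if_pos hres, resolvingNbhd_top hne, card_pair hne]
  norm_num

lemma resolventNbhd_top_nonempty [Nontrivial V] (w : V) : (resolventNbhd ⊤ w).Nonempty := by
  obtain ⟨v, hv⟩ := exists_ne w
  exact ⟨(w, v), mem_filter.mpr ⟨mem_univ _, hv.symm, by simp [dist_top, hv]⟩⟩

lemma arShare_eq_of_forall_rShare_eq {G : SimpleGraph V} {w : V} {c : ℚ}
    (hne : (resolventNbhd G w).Nonempty)
    (hc : ∀ p ∈ resolventNbhd G w, rShare G w p.1 p.2 = c) : arShare G w = c := by
  have hcard : ((resolventNbhd G w).card : ℚ) ≠ 0 := by exact_mod_cast hne.card_pos.ne'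
  rw [arShare, sum_congr rfl hc, sum_const, nsmul_eq_mul, mul_div_cancel_left₀ _ hcard]

lemma arShare_top [Nontrivial V] (w : V) : arShare ⊤ w = 1 / 2 :=
  arShare_eq_of_forall_rShare_eq (resolventNbhd_top_nonempty w)
    fun _ hp => rShare_top_of_mem_resolventNbhd hp

lemma rIndex_top [Nontrivial V] : rIndex (⊤ : SimpleGraph V) = Fintype.card V / 2 := by
  simp only [rIndex, arShare_top, sum_const, card_univ, nsmul_eq_mul]
  ring

/-- The resolving topological index of the complete graph on `n ≥ 2` vertices
is `n/2`. -/
theorem rIndex_completeGraph (n : ℕ) (hn : 2 ≤ n) :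
    rIndex (SimpleGraph.completeGraph (Fin n)) = (n : ℚ) / 2 := by
  have : Nontrivial (Fin n) := Fin.nontrivial_iff_two_le.mpr hn
  rw [completeGraph_eq_top, rIndex_top, Fintype.card_fin]
end

section
/- Let G be the complete k-partite graph K_{n_1,…,n_k} with k ≥ 2 parts, each of size n_i ≥ 2. Then the resolving topological index of G equals Σ_{i=1}^{k} n_i · ( (n_i − 1)/n_i + Σ_{t ≠ i} n_t )^{−1} · ( (n_i − 1)/(2 n_i) + Σ_{t ≠ i} n_t/(n_i + n_t) ). -/
open Finset

variable {V : Type*} [Fintype V] [DecidableEq V]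

namespace RIdx

variable {k : ℕ} {n : Fin k → ℕ}

lemma cmg_adj (u v : Σ i : Fin k, Fin (n i)) :
    (SimpleGraph.completeMultipartiteGraph fun i => Fin (n i)).Adj u v ↔ u.1 ≠ v.1 := by
  simp [SimpleGraph.completeMultipartiteGraph]

lemma cmg_dist (hk : 2 ≤ k) (hn : ∀ i, 2 ≤ n i) (u v : Σ i : Fin k, Fin (n i)) :
    (SimpleGraph.completeMultipartiteGraph fun i => Fin (n i)).dist u v =
      if u = v then 0 else if u.1 = v.1 then 2 else 1 := by
  set G := SimpleGraph.completeMultipartiteGraph fun i => Fin (n i) with hG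
  split_ifs with h1 h2
  · subst h1; exact SimpleGraph.dist_self
  · obtain ⟨j, hj⟩ : ∃ j : Fin k, j ≠ u.1 := by
      have : Nontrivial (Fin k) := Fin.nontrivial_iff_two_le.mpr hk
      exact exists_ne u.1
    have b : Fin (n j) := ⟨0, by have := hn j; omega⟩
    have hadj1 : G.Adj u ⟨j, b⟩ := (cmg_adj _ _).mpr (Ne.symm hj)
    have hadj2 : G.Adj (⟨j, b⟩ : Σ i : Fin k, Fin (n i)) v := (cmg_adj _ _).mpr (h2 ▸ hj)
    have hle : G.dist u v ≤ ((hadj1.toWalk).append hadj2.toWalk).length :=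
      SimpleGraph.dist_le _
    simp only [SimpleGraph.Walk.length_append, SimpleGraph.Walk.length_cons,
      SimpleGraph.Walk.length_nil] at hle
    have h0 : G.dist u v ≠ 0 := by
      rw [ne_eq, SimpleGraph.dist_eq_zero_iff_eq_or_not_reachable]
      push_neg
      exact ⟨h1, ⟨(hadj1.toWalk).append hadj2.toWalk⟩⟩
    have hne1 : G.dist u v ≠ 1 := by
      rw [ne_eq, SimpleGraph.dist_eq_one_iff_adj, cmg_adj]
      simp [h2]
    omega
  · exact SimpleGraph.dist_eq_one_iff_adj.mpr ((cmg_adj u v).mpr h2)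

lemma card_part (i : Fin k) :
    (Finset.univ.filter fun x : Σ i : Fin k, Fin (n i) => x.1 = i).card = n i := by
  rw [Finset.card_filter, ← Finset.univ_sigma_univ, Finset.sum_sigma]
  simp [apply_ite Finset.card, Finset.sum_ite_eq']

lemma rnbhd_same (hk : 2 ≤ k) (hn : ∀ i, 2 ≤ n i) (u v : Σ i : Fin k, Fin (n i))
    (huv : u ≠ v) (hp : u.1 = v.1) :
    resolvingNbhd (SimpleGraph.completeMultipartiteGraph fun i => Fin (n i)) u v = {u, v} := by
  ext x
  simp only [resolvingNbhd, Finset.mem_filter, Finset.mem_univ, true_and,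
    Finset.mem_insert, Finset.mem_singleton]
  rw [SimpleGraph.dist_comm, cmg_dist hk hn, SimpleGraph.dist_comm, cmg_dist hk hn]
  rcases eq_or_ne x u with h1 | h1 <;> rcases eq_or_ne x v with h2 | h2 <;>
    simp_all

lemma rnbhd_diff (hk : 2 ≤ k) (hn : ∀ i, 2 ≤ n i) (u v : Σ i : Fin k, Fin (n i))
    (hp : u.1 ≠ v.1) :
    (resolvingNbhd (SimpleGraph.completeMultipartiteGraph fun i => Fin (n i)) u v).card
      = n u.1 + n v.1 := by
  have hset : resolvingNbhd (SimpleGraph.completeMultipartiteGraph fun i => Fin (n i)) u v =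
      (Finset.univ.filter fun x : Σ i : Fin k, Fin (n i) => x.1 = u.1) ∪
      (Finset.univ.filter fun x => x.1 = v.1) := by
    ext x
    simp only [resolvingNbhd, Finset.mem_filter, Finset.mem_univ, true_and, Finset.mem_union]
    rw [SimpleGraph.dist_comm, cmg_dist hk hn, SimpleGraph.dist_comm, cmg_dist hk hn]
    have hxu : x = u → x.1 = u.1 := fun h => by rw [h]
    have hxv : x = v → x.1 = v.1 := fun h => by rw [h]
    rcases eq_or_ne x u with h1 | h1 <;> rcases eq_or_ne x v with h2 | h2 <;>
      rcases eq_or_ne x.1 u.1 with h3 | h3 <;> rcases eq_or_ne x.1 v.1 with h4 | h4 <;>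
      simp_all
  rw [hset, Finset.card_union_of_disjoint, card_part, card_part]
  rw [Finset.disjoint_left]
  intro x hx hx'
  simp only [Finset.mem_filter] at hx hx'
  exact hp (hx.2 ▸ hx'.2 ▸ rfl)

/-- distance code of `x` relative to `⟨i,a⟩`. -/
def dcl (i : Fin k) (a : Fin (n i)) (x : Σ i : Fin k, Fin (n i)) : ℕ :=
  if x = ⟨i, a⟩ then 0 else if x.1 = i then 2 else 1

lemma dist_w (hk : 2 ≤ k) (hn : ∀ i, 2 ≤ n i) (i : Fin k) (a : Fin (n i))
    (x : Σ i : Fin k, Fin (n i)) :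
    (SimpleGraph.completeMultipartiteGraph fun i => Fin (n i)).dist x ⟨i, a⟩ = dcl i a x := by
  rw [cmg_dist hk hn]; rfl

lemma dcl_ne (i : Fin k) (a : Fin (n i)) {j : Fin k} (b : Fin (n j)) (hj : j ≠ i) :
    dcl i a ⟨j, b⟩ = 1 := by
  unfold dcl
  rw [if_neg, if_neg hj]
  intro h
  exact hj (congrArg Sigma.fst h)

lemma dcl_eq (i : Fin k) (a b : Fin (n i)) :
    dcl i a ⟨i, b⟩ = if b = a then 0 else 2 := by
  unfold dcl
  simp

/-- pointwise value of rShare on the complete multipartite graph -/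
lemma rShare_pt (hk : 2 ≤ k) (hn : ∀ i, 2 ≤ n i) (i : Fin k) (a : Fin (n i))
    (j : Fin k) (b : Fin (n j)) (l : Fin k) (c : Fin (n l)) :
    rShare (SimpleGraph.completeMultipartiteGraph fun i => Fin (n i)) ⟨i, a⟩ ⟨j, b⟩ ⟨l, c⟩ =
      if dcl i a ⟨j, b⟩ ≠ dcl i a ⟨l, c⟩ then
        (if j = l then (1 : ℚ) / 2 else 1 / ((n j : ℚ) + (n l : ℚ))) else 0 := by
  unfold rShare
  rw [dist_w hk hn, dist_w hk hn]
  split_ifs with h1 h2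
  · -- same part, distinct
    subst h2
    have hne : (⟨j, b⟩ : Σ i : Fin k, Fin (n i)) ≠ ⟨j, c⟩ := by
      intro h; exact h1 (by rw [h])
    rw [rnbhd_same hk hn _ _ hne rfl, Finset.card_pair hne]
    norm_num
  · rw [rnbhd_diff hk hn _ _ h2]
    push_cast
    rfl
  · rfl

lemma sum_fin_pair {m : ℕ} (a : Fin m) (x y : ℚ) :
    ∑ c : Fin m, (if c = a then x else y) = x + ((m : ℚ) - 1) * y := by
  rw [← Finset.add_sum_erase _ _ (Finset.mem_univ a), if_pos rfl]
  congr 1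
  rw [Finset.sum_congr rfl (fun c hc => if_neg (Finset.ne_of_mem_erase hc)), Finset.sum_const,
    Finset.card_erase_of_mem (Finset.mem_univ a), Finset.card_univ, Fintype.card_fin,
    nsmul_eq_mul]
  have : 1 ≤ m := a.pos
  push_cast [this]
  ring

/-- the summand for `S`. -/
def FS (i : Fin k) (a : Fin (n i)) (j : Fin k) (b : Fin (n j)) (l : Fin k) (c : Fin (n l)) : ℚ :=
  if dcl i a ⟨j, b⟩ ≠ dcl i a ⟨l, c⟩ then
    (if j = l then (1 : ℚ) / 2 else 1 / ((n j : ℚ) + (n l : ℚ))) else 0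

/-- the summand for the cardinality `C`. -/
def FC (i : Fin k) (a : Fin (n i)) (j : Fin k) (b : Fin (n j)) (l : Fin k) (c : Fin (n l)) : ℚ :=
  if dcl i a ⟨j, b⟩ ≠ dcl i a ⟨l, c⟩ then 1 else 0

lemma FS_ii (i : Fin k) (a : Fin (n i)) :
    ∑ b : Fin (n i), ∑ c : Fin (n i), FS i a i b i c = (n i : ℚ) - 1 := by
  have step : ∀ b : Fin (n i), ∑ c : Fin (n i), FS i a i b i c =
      if b = a then ((n i : ℚ) - 1) * (1 / 2) else 1 / 2 := by
    intro b
    rcases eq_or_ne b a with hb | hb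
    · rw [if_pos hb]
      have : ∀ c : Fin (n i), FS i a i b i c = if c = a then 0 else 1 / 2 := by
        intro c
        unfold FS
        rw [dcl_eq, dcl_eq, if_pos hb]
        rcases eq_or_ne c a with hc | hc <;> simp [hc]
      rw [Finset.sum_congr rfl fun c _ => this c, sum_fin_pair]
      ring
    · rw [if_neg hb]
      have : ∀ c : Fin (n i), FS i a i b i c = if c = a then 1 / 2 else 0 := by
        intro c
        unfold FS
        rw [dcl_eq, dcl_eq, if_neg hb]
        rcases eq_or_ne c a with hc | hc <;> simp [hc]
      rw [Finset.sum_congr rfl fun c _ => this c, sum_fin_pair]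
      ring
  rw [Finset.sum_congr rfl fun b _ => step b, sum_fin_pair]
  ring

lemma FS_il (i : Fin k) (a : Fin (n i)) {l : Fin k} (hl : l ≠ i) :
    ∑ b : Fin (n i), ∑ c : Fin (n l), FS i a i b l c =
      (n i : ℚ) * ((n l : ℚ) / ((n i : ℚ) + (n l : ℚ))) := by
  have : ∀ (b : Fin (n i)) (c : Fin (n l)), FS i a i b l c = 1 / ((n i : ℚ) + (n l : ℚ)) := by
    intro b c
    unfold FS
    rw [dcl_eq, dcl_ne i a c hl, if_neg (Ne.symm hl), if_pos]
    rcases eq_or_ne b a with hb | hb <;> simp [hb]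
  simp only [this, Finset.sum_const, Finset.card_univ, Fintype.card_fin, nsmul_eq_mul]
  ring

lemma FS_li (i : Fin k) (a : Fin (n i)) {j : Fin k} (hj : j ≠ i) :
    ∑ b : Fin (n j), ∑ c : Fin (n i), FS i a j b i c =
      (n i : ℚ) * ((n j : ℚ) / ((n i : ℚ) + (n j : ℚ))) := by
  have : ∀ (b : Fin (n j)) (c : Fin (n i)), FS i a j b i c = 1 / ((n j : ℚ) + (n i : ℚ)) := by
    intro b c
    unfold FS
    rw [dcl_eq, dcl_ne i a b hj, if_neg hj, if_pos]
    rcases eq_or_ne c a with hc | hc <;> simp [hc]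
  simp only [this, Finset.sum_const, Finset.card_univ, Fintype.card_fin, nsmul_eq_mul]
  rw [add_comm (n j : ℚ) (n i : ℚ)]
  ring

lemma FS_jl (i : Fin k) (a : Fin (n i)) {j l : Fin k} (hj : j ≠ i) (hl : l ≠ i) :
    ∑ b : Fin (n j), ∑ c : Fin (n l), FS i a j b l c = 0 := by
  have : ∀ (b : Fin (n j)) (c : Fin (n l)), FS i a j b l c = 0 := by
    intro b c
    unfold FS
    rw [dcl_ne i a b hj, dcl_ne i a c hl]
    simp
  simp only [this, Finset.sum_const_zero]

lemma FC_ii (i : Fin k) (a : Fin (n i)) :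
    ∑ b : Fin (n i), ∑ c : Fin (n i), FC i a i b i c = 2 * ((n i : ℚ) - 1) := by
  have step : ∀ b : Fin (n i), ∑ c : Fin (n i), FC i a i b i c =
      if b = a then ((n i : ℚ) - 1) * 1 else 1 := by
    intro b
    rcases eq_or_ne b a with hb | hb
    · rw [if_pos hb]
      have : ∀ c : Fin (n i), FC i a i b i c = if c = a then 0 else 1 := by
        intro c
        unfold FC
        rw [dcl_eq, dcl_eq, if_pos hb]
        rcases eq_or_ne c a with hc | hc <;> simp [hc]
      rw [Finset.sum_congr rfl fun c _ => this c, sum_fin_pair]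
      ring
    · rw [if_neg hb]
      have : ∀ c : Fin (n i), FC i a i b i c = if c = a then 1 else 0 := by
        intro c
        unfold FC
        rw [dcl_eq, dcl_eq, if_neg hb]
        rcases eq_or_ne c a with hc | hc <;> simp [hc]
      rw [Finset.sum_congr rfl fun c _ => this c, sum_fin_pair]
      ring
  rw [Finset.sum_congr rfl fun b _ => step b, sum_fin_pair]
  ring

lemma FC_il (i : Fin k) (a : Fin (n i)) {l : Fin k} (hl : l ≠ i) :
    ∑ b : Fin (n i), ∑ c : Fin (n l), FC i a i b l c = (n i : ℚ) * (n l : ℚ) := by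
  have : ∀ (b : Fin (n i)) (c : Fin (n l)), FC i a i b l c = 1 := by
    intro b c
    unfold FC
    rw [dcl_eq, dcl_ne i a c hl, if_pos]
    rcases eq_or_ne b a with hb | hb <;> simp [hb]
  simp only [this, Finset.sum_const, Finset.card_univ, Fintype.card_fin, nsmul_eq_mul]
  ring

lemma FC_li (i : Fin k) (a : Fin (n i)) {j : Fin k} (hj : j ≠ i) :
    ∑ b : Fin (n j), ∑ c : Fin (n i), FC i a j b i c = (n i : ℚ) * (n j : ℚ) := by
  have : ∀ (b : Fin (n j)) (c : Fin (n i)), FC i a j b i c = 1 := by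
    intro b c
    unfold FC
    rw [dcl_eq, dcl_ne i a b hj, if_pos]
    rcases eq_or_ne c a with hc | hc <;> simp [hc]
  simp only [this, Finset.sum_const, Finset.card_univ, Fintype.card_fin, nsmul_eq_mul]
  ring

lemma FC_jl (i : Fin k) (a : Fin (n i)) {j l : Fin k} (hj : j ≠ i) (hl : l ≠ i) :
    ∑ b : Fin (n j), ∑ c : Fin (n l), FC i a j b l c = 0 := by
  have : ∀ (b : Fin (n j)) (c : Fin (n l)), FC i a j b l c = 0 := by
    intro b c
    unfold FC
    rw [dcl_ne i a b hj, dcl_ne i a c hl]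
    simp
  simp only [this, Finset.sum_const_zero]

lemma rShare_FS (hk : 2 ≤ k) (hn : ∀ i, 2 ≤ n i) (i : Fin k) (a : Fin (n i))
    (j : Fin k) (b : Fin (n j)) (l : Fin k) (c : Fin (n l)) :
    rShare (SimpleGraph.completeMultipartiteGraph fun i => Fin (n i)) ⟨i, a⟩ ⟨j, b⟩ ⟨l, c⟩ =
      FS i a j b l c := rShare_pt hk hn i a j b l c

lemma S_val (hk : 2 ≤ k) (hn : ∀ i, 2 ≤ n i) (i : Fin k) (a : Fin (n i)) :
    ∑ p ∈ resolventNbhd (SimpleGraph.completeMultipartiteGraph fun i => Fin (n i)) ⟨i, a⟩,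
        rShare (SimpleGraph.completeMultipartiteGraph fun i => Fin (n i)) ⟨i, a⟩ p.1 p.2
      = ((n i : ℚ) - 1) +
        2 * (n i : ℚ) * ∑ t ∈ Finset.univ.erase i, (n t : ℚ) / ((n i : ℚ) + (n t : ℚ)) := by
  set G := SimpleGraph.completeMultipartiteGraph fun i => Fin (n i) with hG
  have h0 : ∑ p ∈ resolventNbhd G ⟨i, a⟩, rShare G ⟨i, a⟩ p.1 p.2
      = ∑ p : (Σ i : Fin k, Fin (n i)) × (Σ i : Fin k, Fin (n i)), rShare G ⟨i, a⟩ p.1 p.2 := by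
    rw [resolventNbhd, Finset.sum_filter]
    refine Finset.sum_congr rfl fun p _ => ?_
    by_cases hd : G.dist p.1 ⟨i, a⟩ ≠ G.dist p.2 ⟨i, a⟩
    · rw [if_pos ⟨fun h => hd (by rw [h]), hd⟩]
    · push_neg at hd
      rw [if_neg (fun h => h.2 (by simp [hd])), rShare, if_neg (by simp [hd])]
  rw [h0, Fintype.sum_prod_type]
  have h1 : ∀ u : Σ i : Fin k, Fin (n i),
      ∑ v : Σ i : Fin k, Fin (n i), rShare G ⟨i, a⟩ u v
        = ∑ l : Fin k, ∑ c : Fin (n l), rShare G ⟨i, a⟩ u ⟨l, c⟩ := fun u => by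
    rw [← Finset.univ_sigma_univ, Finset.sum_sigma]
  rw [Finset.sum_congr rfl fun u _ => h1 u, ← Finset.univ_sigma_univ, Finset.sum_sigma]
  have h2 : ∀ j : Fin k, ∀ b : Fin (n j), ∀ l : Fin k, ∀ c : Fin (n l),
      rShare G ⟨i, a⟩ ⟨j, b⟩ ⟨l, c⟩ = FS i a j b l c := fun j b l c => rShare_FS hk hn i a j b l c
  have h3 : ∑ j : Fin k, ∑ b : Fin (n j), ∑ l : Fin k, ∑ c : Fin (n l),
      rShare G ⟨i, a⟩ ⟨j, b⟩ ⟨l, c⟩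
      = ∑ j : Fin k, ∑ l : Fin k, ∑ b : Fin (n j), ∑ c : Fin (n l), FS i a j b l c := by
    refine Finset.sum_congr rfl fun j _ => ?_
    rw [Finset.sum_congr rfl fun b (_ : b ∈ Finset.univ) =>
      Finset.sum_congr rfl fun l (_ : l ∈ Finset.univ) =>
        Finset.sum_congr rfl fun c (_ : c ∈ Finset.univ) => h2 j b l c]
    exact Finset.sum_comm
  rw [h3]
  have hterm1 : ∑ l : Fin k, ∑ b : Fin (n i), ∑ c : Fin (n l), FS i a i b l c
      = ((n i : ℚ) - 1) +
        ∑ l ∈ Finset.univ.erase i, (n i : ℚ) * ((n l : ℚ) / ((n i : ℚ) + (n l : ℚ))) := by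
    rw [← Finset.add_sum_erase _ _ (Finset.mem_univ i), FS_ii]
    congr 1
    exact Finset.sum_congr rfl fun l hl => FS_il i a (Finset.ne_of_mem_erase hl)
  have hterm2 : ∀ j ∈ Finset.univ.erase i,
      ∑ l : Fin k, ∑ b : Fin (n j), ∑ c : Fin (n l), FS i a j b l c
        = (n i : ℚ) * ((n j : ℚ) / ((n i : ℚ) + (n j : ℚ))) := fun j hj => by
    have hj' := Finset.ne_of_mem_erase hj
    rw [← Finset.add_sum_erase _ _ (Finset.mem_univ i), FS_li i a hj',
      Finset.sum_congr rfl fun l hl => FS_jl i a hj' (Finset.ne_of_mem_erase hl)]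
    simp
  rw [← Finset.add_sum_erase _ _ (Finset.mem_univ i), hterm1,
    Finset.sum_congr rfl hterm2, ← Finset.mul_sum]
  ring

lemma C_val (hk : 2 ≤ k) (hn : ∀ i, 2 ≤ n i) (i : Fin k) (a : Fin (n i)) :
    (((resolventNbhd (SimpleGraph.completeMultipartiteGraph fun i => Fin (n i)) ⟨i, a⟩).card : ℚ))
      = 2 * (((n i : ℚ) - 1) + (n i : ℚ) * ∑ t ∈ Finset.univ.erase i, (n t : ℚ)) := by
  set G := SimpleGraph.completeMultipartiteGraph fun i => Fin (n i) with hG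
  have h0 : resolventNbhd G ⟨i, a⟩
      = Finset.univ.filter fun p : (Σ i : Fin k, Fin (n i)) × (Σ i : Fin k, Fin (n i)) =>
          G.dist p.1 ⟨i, a⟩ ≠ G.dist p.2 ⟨i, a⟩ := by
    rw [resolventNbhd]
    ext p
    simp only [Finset.mem_filter, Finset.mem_univ, true_and, and_iff_right_iff_imp]
    intro h hp
    exact h (by rw [hp])
  have h0' : ((resolventNbhd G ⟨i, a⟩).card : ℚ)
      = ∑ p : (Σ i : Fin k, Fin (n i)) × (Σ i : Fin k, Fin (n i)),
          (if G.dist p.1 ⟨i, a⟩ ≠ G.dist p.2 ⟨i, a⟩ then (1 : ℚ) else 0) := by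
    rw [h0, Finset.card_filter]
    push_cast
    exact Finset.sum_congr rfl fun p _ => by split_ifs <;> simp
  rw [h0', Fintype.sum_prod_type]
  have h1 : ∀ u : Σ i : Fin k, Fin (n i),
      ∑ v : Σ i : Fin k, Fin (n i), (if G.dist u ⟨i, a⟩ ≠ G.dist v ⟨i, a⟩ then (1 : ℚ) else 0)
        = ∑ l : Fin k, ∑ c : Fin (n l),
            (if G.dist u ⟨i, a⟩ ≠ G.dist (⟨l, c⟩ : Σ i : Fin k, Fin (n i)) ⟨i, a⟩
              then (1 : ℚ) else 0) := fun u => by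
    rw [← Finset.univ_sigma_univ, Finset.sum_sigma]
  rw [Finset.sum_congr rfl fun u _ => h1 u, ← Finset.univ_sigma_univ, Finset.sum_sigma]
  have h2 : ∀ j : Fin k, ∀ b : Fin (n j), ∀ l : Fin k, ∀ c : Fin (n l),
      (if G.dist (⟨j, b⟩ : Σ i : Fin k, Fin (n i)) ⟨i, a⟩
          ≠ G.dist (⟨l, c⟩ : Σ i : Fin k, Fin (n i)) ⟨i, a⟩ then (1 : ℚ) else 0)
        = FC i a j b l c := fun j b l c => by
    rw [FC, dist_w hk hn, dist_w hk hn]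
  have h3 : ∑ j : Fin k, ∑ b : Fin (n j), ∑ l : Fin k, ∑ c : Fin (n l),
      (if G.dist (⟨j, b⟩ : Σ i : Fin k, Fin (n i)) ⟨i, a⟩
          ≠ G.dist (⟨l, c⟩ : Σ i : Fin k, Fin (n i)) ⟨i, a⟩ then (1 : ℚ) else 0)
      = ∑ j : Fin k, ∑ l : Fin k, ∑ b : Fin (n j), ∑ c : Fin (n l), FC i a j b l c := by
    refine Finset.sum_congr rfl fun j _ => ?_
    rw [Finset.sum_congr rfl fun b (_ : b ∈ Finset.univ) =>
      Finset.sum_congr rfl fun l (_ : l ∈ Finset.univ) =>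
        Finset.sum_congr rfl fun c (_ : c ∈ Finset.univ) => h2 j b l c]
    exact Finset.sum_comm
  rw [h3]
  have hterm1 : ∑ l : Fin k, ∑ b : Fin (n i), ∑ c : Fin (n l), FC i a i b l c
      = 2 * ((n i : ℚ) - 1) + ∑ l ∈ Finset.univ.erase i, (n i : ℚ) * (n l : ℚ) := by
    rw [← Finset.add_sum_erase _ _ (Finset.mem_univ i), FC_ii]
    congr 1
    exact Finset.sum_congr rfl fun l hl => FC_il i a (Finset.ne_of_mem_erase hl)
  have hterm2 : ∀ j ∈ Finset.univ.erase i,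
      ∑ l : Fin k, ∑ b : Fin (n j), ∑ c : Fin (n l), FC i a j b l c
        = (n i : ℚ) * (n j : ℚ) := fun j hj => by
    have hj' := Finset.ne_of_mem_erase hj
    rw [← Finset.add_sum_erase _ _ (Finset.mem_univ i), FC_li i a hj',
      Finset.sum_congr rfl fun l hl => FC_jl i a hj' (Finset.ne_of_mem_erase hl)]
    simp
  rw [← Finset.add_sum_erase _ _ (Finset.mem_univ i), hterm1,
    Finset.sum_congr rfl hterm2, ← Finset.mul_sum]
  ring

lemma arShare_val (hk : 2 ≤ k) (hn : ∀ i, 2 ≤ n i) (i : Fin k) (a : Fin (n i)) :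
    arShare (SimpleGraph.completeMultipartiteGraph fun i => Fin (n i)) ⟨i, a⟩ =
      (((n i : ℚ) - 1) +
          2 * (n i : ℚ) * ∑ t ∈ Finset.univ.erase i, (n t : ℚ) / ((n i : ℚ) + (n t : ℚ))) /
        (2 * (((n i : ℚ) - 1) + (n i : ℚ) * ∑ t ∈ Finset.univ.erase i, (n t : ℚ))) := by
  rw [arShare, S_val hk hn, C_val hk hn]

end RIdx

/-- The resolving topological index of the complete `k`-partite graph
`K_{n_1,…,n_k}` with `k ≥ 2` parts, each of size `n_i ≥ 2`. -/
theorem rIndex_completeMultipartiteGraph (k : ℕ) (hk : 2 ≤ k) (n : Fin k → ℕ)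
    (hn : ∀ i, 2 ≤ n i) :
    rIndex (SimpleGraph.completeMultipartiteGraph fun i => Fin (n i)) =
      ∑ i : Fin k,
        (n i : ℚ) *
          (((n i : ℚ) - 1) / (n i : ℚ) +
              ∑ t ∈ Finset.univ.erase i, (n t : ℚ))⁻¹ *
          (((n i : ℚ) - 1) / (2 * (n i : ℚ)) +
            ∑ t ∈ Finset.univ.erase i, (n t : ℚ) / ((n i : ℚ) + (n t : ℚ))) := by
  rw [rIndex, ← Finset.univ_sigma_univ, Finset.sum_sigma]
  refine Finset.sum_congr rfl fun i _ => ?_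
  rw [Finset.sum_congr rfl fun a (_ : a ∈ Finset.univ) => RIdx.arShare_val hk hn i a,
    Finset.sum_const, Finset.card_univ, Fintype.card_fin, nsmul_eq_mul]
  set T := ∑ t ∈ Finset.univ.erase i, (n t : ℚ) / ((n i : ℚ) + (n t : ℚ)) with hT
  set M := ∑ t ∈ Finset.univ.erase i, (n t : ℚ) with hM
  have hN : (2 : ℚ) ≤ (n i : ℚ) := by exact_mod_cast hn i
  have hM0 : 0 ≤ M := by
    rw [hM]
    exact Finset.sum_nonneg fun t _ => by positivity
  have hN0 : (0 : ℚ) < (n i : ℚ) := by linarith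
  have hD : (0 : ℚ) < ((n i : ℚ) - 1) + (n i : ℚ) * M := by nlinarith
  have hrw : ((n i : ℚ) - 1) / (n i : ℚ) + M = (((n i : ℚ) - 1) + (n i : ℚ) * M) / (n i : ℚ) := by
    field_simp
  rw [hrw, inv_div]
  field_simp
end
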